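/- arXiv:2209.09854 — 3 statements merged into one kernel-verified Lean document; each statement's English description precedes it below -/
import Mathlib

section
/- Let F̃ : ℝ⁴ → ℝ² be F̃(x, y, p_x, p_y) = (x·p_x + y·p_y, x·p_y − y·p_x) and let R = ℝ² \ {(0,0)}. Then the map σ : R → ℝ⁴, σ(c₁, c₂) = (c₁, −c₂, 1, 0), satisfies F̃(σ(c)) = c for every c ∈ R, i.e. σ is a global section of F̃ over R; moreover there is a homeomorphism Ψ : F̃⁻¹(R) → R × F̃⁻¹(1, 0) such that pr₁ ∘ Ψ = F̃, so the fibration F̃ restricted over R is trivial. -/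
def ffF (w : ℝ × ℝ × ℝ × ℝ) : ℝ × ℝ :=
  (w.1 * w.2.2.1 + w.2.1 * w.2.2.2, w.1 * w.2.2.2 - w.2.1 * w.2.2.1)

lemma ff_n_ne (c : ℝ × ℝ) (h : c ≠ (0, 0)) : c.1 ^ 2 + c.2 ^ 2 ≠ 0 := by
  intro hn
  have h1 : c.1 = 0 := by nlinarith [sq_nonneg c.1, sq_nonneg c.2]
  have h2 : c.2 = 0 := by nlinarith [sq_nonneg c.1, sq_nonneg c.2]
  exact h (Prod.ext h1 h2)

noncomputable def ffPsi (z : ℝ × ℝ × ℝ × ℝ) : ℝ × ℝ × ℝ × ℝ :=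
  (z.1, z.2.1,
   (z.2.2.1 * (ffF z).1 + z.2.2.2 * (ffF z).2) / ((ffF z).1 ^ 2 + (ffF z).2 ^ 2),
   (z.2.2.2 * (ffF z).1 - z.2.2.1 * (ffF z).2) / ((ffF z).1 ^ 2 + (ffF z).2 ^ 2))

def ffPhi (c : ℝ × ℝ) (z : ℝ × ℝ × ℝ × ℝ) : ℝ × ℝ × ℝ × ℝ :=
  (z.1, z.2.1, z.2.2.1 * c.1 - z.2.2.2 * c.2, z.2.2.1 * c.2 + z.2.2.2 * c.1)

lemma ffF_Psi (z : ℝ × ℝ × ℝ × ℝ) (h : ffF z ≠ (0, 0)) : ffF (ffPsi z) = (1, 0) := by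
  have hn := ff_n_ne _ h
  simp only [ffF, ffPsi] at *
  ext <;> field_simp <;> rw [div_eq_iff (by convert hn using 1; ring)] <;> ring

lemma ffF_Phi (c : ℝ × ℝ) (z : ℝ × ℝ × ℝ × ℝ) (h : ffF z = (1, 0)) :
    ffF (ffPhi c z) = c := by
  have h1 : z.1 * z.2.2.1 + z.2.1 * z.2.2.2 = 1 := congrArg Prod.fst h
  have h2 : z.1 * z.2.2.2 - z.2.1 * z.2.2.1 = 0 := congrArg Prod.snd h
  simp only [ffF, ffPhi]
  ext
  · show _ = c.1
    linear_combination c.1 * h1 - c.2 * h2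
  · show _ = c.2
    linear_combination c.2 * h1 + c.1 * h2

lemma ffPhi_Psi (z : ℝ × ℝ × ℝ × ℝ) (h : ffF z ≠ (0, 0)) : ffPhi (ffF z) (ffPsi z) = z := by
  have hn := ff_n_ne _ h
  simp only [ffF] at hn
  simp only [ffF, ffPhi, ffPsi]
  ext <;> simp <;> field_simp <;> (try rw [div_eq_iff (by convert hn using 1; ring)]) <;> ring

lemma ffPsi_Phi (c : ℝ × ℝ) (z : ℝ × ℝ × ℝ × ℝ) (hc : c ≠ (0, 0)) (h : ffF z = (1, 0)) :
    ffPsi (ffPhi c z) = z := by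
  have hn := ff_n_ne _ hc
  have hf := ffF_Phi c z h
  simp only [ffPsi]
  rw [hf]
  simp only [ffPhi]
  ext <;> simp <;> field_simp <;> ring

lemma ffF_cont : Continuous ffF := by
  unfold ffF; fun_prop

/-- `σ(c₁, c₂) = (c₁, −c₂, 1, 0)` is a global section of `F̃` over
`R = ℝ² \ {(0,0)}`, and the fibration `F̃` restricted over `R` is trivial: there is
a homeomorphism `Ψ : F̃⁻¹(R) → R × F̃⁻¹(1,0)` with `pr₁ ∘ Ψ = F̃`. -/
theorem ffF_bundle_trivial :
    (∀ c : ℝ × ℝ, c ≠ (0, 0) → ffF (c.1, -c.2, 1, 0) = c) ∧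
    ∃ Ψ : {z : ℝ × ℝ × ℝ × ℝ // ffF z ≠ (0, 0)} ≃ₜ
          ({c : ℝ × ℝ // c ≠ (0, 0)} × {z : ℝ × ℝ × ℝ × ℝ // ffF z = (1, 0)}),
      ∀ z : {z : ℝ × ℝ × ℝ × ℝ // ffF z ≠ (0, 0)}, ((Ψ z).1 : ℝ × ℝ) = ffF z.val := by
  constructor
  · intro c _
    simp [ffF]
  · have hcontF : Continuous fun z : {z : ℝ × ℝ × ℝ × ℝ // ffF z ≠ (0, 0)} => ffF z.val :=
      ffF_cont.comp continuous_subtype_val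
    refine ⟨⟨⟨fun z => (⟨ffF z.val, z.prop⟩, ⟨ffPsi z.val, ffF_Psi z.val z.prop⟩),
      fun p => ⟨ffPhi p.1.val p.2.val, (ffF_Phi p.1.val p.2.val p.2.prop).symm ▸ p.1.prop⟩,
      ?_, ?_⟩, ?_, ?_⟩, fun z => rfl⟩
    · intro z
      exact Subtype.ext (ffPhi_Psi z.val z.prop)
    · intro p
      refine Prod.ext (Subtype.ext ?_) (Subtype.ext ?_)
      · exact ffF_Phi p.1.val p.2.val p.2.prop
      · exact ffPsi_Phi p.1.val p.2.val p.1.prop p.2.prop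
    · refine Continuous.prodMk (hcontF.subtype_mk _) (Continuous.subtype_mk ?_ _)
      have hden : ∀ z : {z : ℝ × ℝ × ℝ × ℝ // ffF z ≠ (0, 0)},
          (ffF z.val).1 ^ 2 + (ffF z.val).2 ^ 2 ≠ 0 := fun z => ff_n_ne _ z.prop
      unfold ffPsi
      refine Continuous.prodMk (by fun_prop) (Continuous.prodMk (by fun_prop) ?_)
      refine Continuous.prodMk (Continuous.div ?_ ?_ hden) (Continuous.div ?_ ?_ hden) <;>
        fun_prop
    · refine Continuous.subtype_mk ?_ _
      unfold ffPhi
      fun_prop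
end

section
/- The regular fiber F̃⁻¹(1, 0) = {(x, y, p_x, p_y) ∈ ℝ⁴ : x·p_x + y·p_y = 1 and x·p_y − y·p_x = 0} of the standard focus-focus integral map is homeomorphic to the cylinder S¹ × ℝ. -/
open Metric Set

/-- The fiber is homeomorphic to the nonzero complex numbers. -/
noncomputable def ffFiberHomeoNonzero :
    {z : ℝ × ℝ × ℝ × ℝ //
        z.1 * z.2.2.1 + z.2.1 * z.2.2.2 = 1 ∧ z.1 * z.2.2.2 - z.2.1 * z.2.2.1 = 0}
      ≃ₜ ({0}ᶜ : Set ℂ) where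
  toFun p := ⟨⟨p.1.1, p.1.2.1⟩, by
    simp only [Set.mem_compl_iff, Set.mem_singleton_iff]
    intro h0
    have hx : p.1.1 = 0 := congrArg Complex.re h0
    have hy : p.1.2.1 = 0 := congrArg Complex.im h0
    have := p.2.1
    rw [hx, hy] at this
    simp at this⟩
  invFun w := ⟨(w.1.re, w.1.im, w.1.re / (w.1.re ^ 2 + w.1.im ^ 2),
      w.1.im / (w.1.re ^ 2 + w.1.im ^ 2)), by
    have hw : (w.1 : ℂ) ≠ 0 := w.2
    have hd : w.1.re ^ 2 + w.1.im ^ 2 ≠ 0 := by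
      have := Complex.normSq_pos.2 hw
      rw [Complex.normSq_apply] at this
      nlinarith
    constructor <;> field_simp <;> ring⟩
  left_inv := by
    rintro ⟨⟨x, y, px, py⟩, h1, h2⟩
    have hd : x ^ 2 + y ^ 2 ≠ 0 := by
      intro h0
      have hx : x = 0 := by nlinarith [sq_nonneg x, sq_nonneg y]
      have hy : y = 0 := by nlinarith [sq_nonneg x, sq_nonneg y]
      rw [hx, hy] at h1; simp at h1
    apply Subtype.ext
    simp only
    refine Prod.ext rfl (Prod.ext rfl (Prod.ext ?_ ?_)) <;> simp only
    · rw [div_eq_iff hd]; simp only at h1 h2; linear_combination -x * h1 + y * h2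
    · rw [div_eq_iff hd]; simp only at h1 h2; linear_combination -y * h1 - x * h2
  right_inv := by
    rintro ⟨w, hw⟩
    exact Subtype.ext (Complex.ext rfl rfl)
  continuous_toFun := by
    apply Continuous.subtype_mk
    have : (fun (p : {z : ℝ × ℝ × ℝ × ℝ //
        z.1 * z.2.2.1 + z.2.1 * z.2.2.2 = 1 ∧ z.1 * z.2.2.2 - z.2.1 * z.2.2.1 = 0}) =>
        (⟨p.1.1, p.1.2.1⟩ : ℂ)) =
        fun p => (p.1.1 : ℂ) + (p.1.2.1 : ℂ) * Complex.I := by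
      funext p
      exact Complex.mk_eq_add_mul_I p.1.1 p.1.2.1
    rw [this]
    fun_prop
  continuous_invFun := by
    apply Continuous.subtype_mk
    have hd : ∀ (w : ({0}ᶜ : Set ℂ)), w.1.re ^ 2 + w.1.im ^ 2 ≠ 0 := by
      intro w
      have := Complex.normSq_pos.2 w.2
      rw [Complex.normSq_apply] at this
      nlinarith
    have hre : Continuous fun (w : ({0}ᶜ : Set ℂ)) => w.1.re := by fun_prop
    have him : Continuous fun (w : ({0}ᶜ : Set ℂ)) => w.1.im := by fun_prop
    exact hre.prodMk (him.prodMk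
      (((hre.div ((hre.pow 2).add (him.pow 2)) hd)).prodMk
        (him.div ((hre.pow 2).add (him.pow 2)) hd)))

/-- The unit sphere in `ℂ` is homeomorphic to `Circle`. -/
def sphereHomeoCircle : (sphere (0 : ℂ) 1) ≃ₜ Circle where
  toFun z := ⟨z.1, z.2⟩
  invFun z := ⟨z.1, z.2⟩
  left_inv _ := rfl
  right_inv _ := rfl
  continuous_toFun := Continuous.subtype_mk continuous_subtype_val _
  continuous_invFun := Continuous.subtype_mk continuous_subtype_val _

/-- The regular fiber `F̃⁻¹(1, 0)` of the standard focus-focus integral map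
`F̃(x, y, p_x, p_y) = (x·p_x + y·p_y, x·p_y − y·p_x)` is homeomorphic to the cylinder
`S¹ × ℝ`. -/
theorem ffF_fiber_one_zero_cylinder :
    Nonempty
      ({z : ℝ × ℝ × ℝ × ℝ //
          z.1 * z.2.2.1 + z.2.1 * z.2.2.2 = 1 ∧ z.1 * z.2.2.2 - z.2.1 * z.2.2.1 = 0}
        ≃ₜ Circle × ℝ) := by
  exact ⟨ffFiberHomeoNonzero.trans ((homeomorphUnitSphereProd ℂ).trans
    (sphereHomeoCircle.prodCongr Real.expOrderIso.toHomeomorph.symm))⟩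
end

section
/- Let c ∈ ℂ with c ≠ 0, ε > 0, and s ∈ ℝ. If τ ∈ ℂ satisfies e^τ·(c/(e^{−i·s}·ε)) = e^{i·s}·ε, then Re τ = 2·log ε − log|c| and Im τ ≡ −arg c (mod 2π). In particular the imaginary part of the connecting time from the circle 𝒞_s to the circle 𝒞_u on the fiber 𝓗⁻¹(c) depends, modulo 2π, only on c and not on ε or s. -/
/-- For `c ≠ 0`, `ε > 0`, `s ∈ ℝ`: if `τ ∈ ℂ` satisfies
`e^τ·(c/(e^{−is}·ε)) = e^{is}·ε` (i.e. `τ` is a connecting time from the circle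
`𝒞_s` to the circle `𝒞_u` on the fiber `𝓗⁻¹(c)`), then
`Re τ = 2·log ε − log |c|` and `Im τ ≡ −arg c (mod 2π)`. In particular `Im τ`
depends, modulo `2π`, only on `c` and not on `ε` or `s`. -/
theorem ffFlow_connecting_time (c : ℂ) (hc : c ≠ 0) (ε : ℝ) (hε : 0 < ε) (s : ℝ)
    (τ : ℂ)
    (hτ : Complex.exp τ * (c / (Complex.exp (-(s : ℂ) * Complex.I) * (ε : ℂ)))
            = Complex.exp ((s : ℂ) * Complex.I) * (ε : ℂ)) :
    τ.re = 2 * Real.log ε - Real.log ‖c‖ ∧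
    ∃ k : ℤ, τ.im = -Complex.arg c + 2 * Real.pi * k := by
  have hεC : (ε : ℂ) ≠ 0 := by exact_mod_cast hε.ne'
  have he : Complex.exp (-(s : ℂ) * Complex.I) ≠ 0 := Complex.exp_ne_zero _
  have hone : Complex.exp ((s : ℂ) * Complex.I) * Complex.exp (-(s : ℂ) * Complex.I)
      = 1 := by
    rw [← Complex.exp_add]; ring_nf; exact Complex.exp_zero
  have hw : Complex.exp τ = ((ε^2 : ℝ) : ℂ) * c⁻¹ := by
    have h2 : Complex.exp τ * c = ((ε^2 : ℝ) : ℂ) := by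
      field_simp at hτ
      simp only [neg_mul] at hτ hone
      push_cast
      linear_combination hτ + (ε:ℂ)^2 * hone
    field_simp [hc] at h2 ⊢
    linear_combination h2
  set w : ℂ := ((ε^2 : ℝ) : ℂ) * c⁻¹ with hwdef
  have hwne : w ≠ 0 := mul_ne_zero (Complex.ofReal_ne_zero.mpr (by positivity)) (inv_ne_zero hc)
  have hlog : Complex.exp τ = Complex.exp (Complex.log w) := by
    rw [Complex.exp_log hwne, hw]
  obtain ⟨n, hn⟩ := (Complex.exp_eq_exp_iff_exists_int).mp hlog
  have hre : τ.re = (Complex.log w).re := by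
    rw [hn]; simp
  have him : τ.im = (Complex.log w).im + n * (2 * Real.pi) := by
    rw [hn]; simp [Complex.add_im, Complex.mul_im, Complex.I_im, Complex.I_re]
  have habs : ‖w‖ = ε^2 * ‖c‖⁻¹ := by
    simp [hwdef, norm_mul, norm_inv, abs_of_pos hε, abs_of_pos (by positivity : (0:ℝ) < ε^2)]
  have harg : Complex.arg w = Complex.arg c⁻¹ := by
    rw [hwdef]
    exact_mod_cast Complex.arg_real_mul _ (by positivity : (0:ℝ) < ε^2)
  constructor
  · rw [hre, Complex.log_re, habs, Real.log_mul (by positivity)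
      (inv_ne_zero ((norm_ne_zero_iff.mpr hc))), Real.log_inv, Real.log_pow]
    push_cast; ring
  · rw [him, Complex.log_im, harg, Complex.arg_inv]
    by_cases h : Complex.arg c = Real.pi
    · refine ⟨n + 1, ?_⟩
      simp [h]; ring
    · refine ⟨n, ?_⟩
      simp [h]; ring
end
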